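/- arXiv:0907.1493 — 14 statements merged into one kernel-verified Lean document; each statement's English description precedes it below -/
import Mathlib

section
/- Let n ≥ 2 be an integer and a, b, c ∈ ℝ. Define f(x) = ((b + n·a − a)·x^(n−2))/(1 − a·x^(n−1)) and g(x) = (1 − a·x^(n−1))·(x + c·x^n). Then there exists a neighborhood of 0 on which the identity g′(x) + f(x)·g(x) = 1 holds for all x if and only if either (a = b and c = 0) or (a = b/n and c = −(n−1)·b/n²). -/
/-!
Put `u = x^(n-1)`. Wherever `1 - a u ≠ 0`, which holds near `0`, the factor `1 - a u` cancels in
`f g` and `g' + f g = 1 + A u + B u²` with `A = c n + b - a` and `B = c (b - a n)`. A polynomial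
vanishing on a neighbourhood of `0` is zero, so the identity holds near `0` iff `A = B = 0`, and
solving these two equations (split on the factor of `B` that vanishes) gives the two families.
-/

open Filter Topology Polynomial

theorem exists_abs_lt_imp_iff_eventually_nhds_zero {p : ℝ → Prop} :
    (∃ ε > 0, ∀ x : ℝ, |x| < ε → p x) ↔ ∀ᶠ x in 𝓝 0, p x := by
  simp only [Metric.eventually_nhds_iff, Real.dist_eq, sub_zero]

theorem eventually_one_sub_mul_pow_ne_zero (a : ℝ) {k : ℕ} (hk : k ≠ 0) :
    ∀ᶠ x in 𝓝 (0 : ℝ), 1 - a * x ^ k ≠ 0 :=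
  (show Continuous fun x : ℝ => 1 - a * x ^ k by fun_prop).continuousAt.eventually_ne
    (by simp [hk])

theorem hasDerivAt_one_sub_mul_pow_mul_add_mul_pow (a c x : ℝ) (m : ℕ) :
    HasDerivAt (fun x => (1 - a * x ^ (m + 1)) * (x + c * x ^ (m + 2)))
      (-(a * (m + 1) * x ^ m) * (x + c * x ^ (m + 2)) +
        (1 - a * x ^ (m + 1)) * (1 + c * (m + 2) * x ^ (m + 1))) x := by
  have h₁ := ((hasDerivAt_pow (m + 1) x).const_mul a).const_sub 1
  have h₂ := (hasDerivAt_id' x).add ((hasDerivAt_pow (m + 2) x).const_mul c)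
  refine (h₁.mul h₂).congr_deriv ?_
  simp only [Nat.add_sub_cancel, Pi.add_apply]
  push_cast
  ring

theorem deriv_add_mul_eq_one_add {n : ℕ} (hn : 2 ≤ n) {a x : ℝ} (b c : ℝ)
    (hx : 1 - a * x ^ (n - 1) ≠ 0) :
    deriv (fun x => (1 - a * x ^ (n - 1)) * (x + c * x ^ n)) x +
        (b + n * a - a) * x ^ (n - 2) / (1 - a * x ^ (n - 1)) *
          ((1 - a * x ^ (n - 1)) * (x + c * x ^ n)) =
      1 + ((c * n + b - a) * x ^ (n - 1) + c * (b - a * n) * x ^ (2 * (n - 1))) := by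
  obtain ⟨m, rfl⟩ : ∃ m, n = m + 2 := ⟨n - 2, by omega⟩
  simp only [Nat.add_sub_cancel, show m + 2 - 1 = m + 1 from rfl] at hx ⊢
  rw [(hasDerivAt_one_sub_mul_pow_mul_add_mul_pow a c x m).deriv]
  field_simp
  push_cast
  ring

theorem eventually_mul_pow_add_mul_pow_eq_zero_iff {k : ℕ} (hk : k ≠ 0) {A B : ℝ} :
    (∀ᶠ x in 𝓝 0, A * x ^ k + B * x ^ (2 * k) = 0) ↔ A = 0 ∧ B = 0 := by
  refine ⟨fun h => ?_, fun ⟨hA, hB⟩ => by simp [hA, hB]⟩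
  set p : ℝ[X] := C A * X ^ k + C B * X ^ (2 * k)
  have hp : p = 0 := p.eq_zero_of_infinite_isRoot <| infinite_of_mem_nhds 0 <| by
    filter_upwards [h] with x hx
    simpa [p] using hx
  have hk2 : 2 * k ≠ k := by omega
  constructor
  · simpa [p, hk2.symm] using congr_arg (coeff · k) hp
  · simpa [p, hk2] using congr_arg (coeff · (2 * k)) hp

theorem mul_add_sub_eq_zero_and_mul_sub_mul_eq_zero_iff {K : Type*} [Field K] {n : K} (hn : n ≠ 0)
    {a b c : K} :
    (c * n + b - a = 0 ∧ c * (b - a * n) = 0) ↔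
      ((a = b ∧ c = 0) ∨ (a = b / n ∧ c = -((n - 1) * b) / n ^ 2)) := by
  constructor
  · rintro ⟨hA, hB⟩
    rcases mul_eq_zero.mp hB with hc | hb
    · exact .inl ⟨by linear_combination -hA + n * hc, hc⟩
    · obtain rfl : b = a * n := by linear_combination hb
      refine .inr ⟨by field_simp, ?_⟩
      field_simp
      linear_combination hA
  · rintro (⟨rfl, rfl⟩ | ⟨rfl, rfl⟩)
    · simp
    · constructor <;> field_simp <;> ring

/-- Classification of isochronous centers with zero Urabe function for the
homogeneous perturbation `ẋ = −y + a x^(n−1) y, ẏ = x + b x^(n−2) y² + c xⁿ`: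
the associated Liénard data `f, g` satisfy `g′ + f·g = 1` near `0` iff
`(a = b ∧ c = 0)` or `(a = b/n ∧ c = −(n−1)b/n²)`. -/
theorem stmt_0 (n : ℕ) (hn : 2 ≤ n) (a b c : ℝ) (f g : ℝ → ℝ)
    (hf : ∀ x : ℝ, f x = ((b + (n : ℝ) * a - a) * x ^ (n - 2)) / (1 - a * x ^ (n - 1)))
    (hg : ∀ x : ℝ, g x = (1 - a * x ^ (n - 1)) * (x + c * x ^ n)) :
    (∃ ε > (0 : ℝ), ∀ x : ℝ, |x| < ε → deriv g x + f x * g x = 1) ↔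
      ((a = b ∧ c = 0) ∨ (a = b / (n : ℝ) ∧ c = -(((n : ℝ) - 1) * b) / (n : ℝ) ^ 2)) := by
  have hreduce : ∀ᶠ x in 𝓝 0, deriv g x + f x * g x = 1 ↔
      (c * n + b - a) * x ^ (n - 1) + c * (b - a * n) * x ^ (2 * (n - 1)) = 0 := by
    filter_upwards [eventually_one_sub_mul_pow_ne_zero a (by omega : n - 1 ≠ 0)] with x hx
    simp only [hf, funext hg]
    rw [deriv_add_mul_eq_one_add hn b c hx, add_eq_left]
  rw [exists_abs_lt_imp_iff_eventually_nhds_zero, eventually_congr hreduce,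
    eventually_mul_pow_add_mul_pow_eq_zero_iff (by omega),
    mul_add_sub_eq_zero_and_mul_sub_mul_eq_zero_iff (by positivity)]
end

section
/- Let n ≥ 2 be an integer and a ∈ ℝ. Define H(x,y) = (x² + y²)·(1 − a·x^(n−1))^(−2/(n−1)) on the open set U = {(x,y) ∈ ℝ² : 1 − a·x^(n−1) > 0}. Then for every (x,y) ∈ U, (−y + a·x^(n−1)·y)·∂H/∂x(x,y) + (x + a·x^(n−2)·y²)·∂H/∂y(x,y) = 0, i.e. H is a first integral of the system ẋ = −y + a·x^(n−1)·y, ẏ = x + a·x^(n−2)·y². -/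
/-!
Write `g = 1 − a x^(n−1)` and `p = −2/(n−1)`. The first component of the field is `−y g`, and
`p (n−1) = −2` turns `∂H/∂x` into `g^(p−1) (2x g + 2a x^(n−2) (x² + y²))`. After factoring out
`2y g^p` the two contributions to the Lie derivative differ by `x g − x + a x^n = 0`.
-/

open Real

lemma hasDerivAt_one_sub_mul_pow_rpow (m : ℕ) (a p x : ℝ) (hx : 1 - a * x ^ (m + 1) ≠ 0) :
    HasDerivAt (fun t : ℝ => (1 - a * t ^ (m + 1)) ^ p)
      (-(a * (m + 1) * x ^ m) * p * (1 - a * x ^ (m + 1)) ^ (p - 1)) x := by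
  have hinner : HasDerivAt (fun t : ℝ => 1 - a * t ^ (m + 1)) (-(a * (m + 1) * x ^ m)) x := by
    refine (((hasDerivAt_pow (m + 1) x).const_mul a).const_sub 1).congr_deriv ?_
    push_cast
    ring
  exact hinner.rpow_const (Or.inl hx)

/-- `H(x,y) = (x² + y²)·(1 − a x^(n−1))^(−2/(n−1))` is a first integral of the
system `ẋ = −y + a x^(n−1) y, ẏ = x + a x^(n−2) y²` on the set where
`1 − a x^(n−1) > 0`. -/
theorem stmt_1 (n : ℕ) (hn : 2 ≤ n) (a : ℝ) (x y : ℝ)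
    (hxy : 1 - a * x ^ (n - 1) > 0) :
    (-y + a * x ^ (n - 1) * y) *
        deriv (fun t : ℝ => (t ^ 2 + y ^ 2) * (1 - a * t ^ (n - 1)) ^ (-2 / ((n : ℝ) - 1))) x
      + (x + a * x ^ (n - 2) * y ^ 2) *
        deriv (fun t : ℝ => (x ^ 2 + t ^ 2) * (1 - a * x ^ (n - 1)) ^ (-2 / ((n : ℝ) - 1))) y
      = 0 := by
  obtain ⟨m, rfl⟩ : ∃ m, n = m + 2 := ⟨n - 2, by omega⟩
  have hexp : -2 / ((↑(m + 2) : ℝ) - 1) = -2 / (m + 1) := by push_cast; ring_nf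
  simp only [Nat.add_sub_cancel, show m + 2 - 1 = m + 1 from rfl, hexp] at hxy ⊢
  set g := 1 - a * x ^ (m + 1)
  set p : ℝ := -2 / (m + 1) with hp
  have hdx : HasDerivAt (fun t : ℝ => (t ^ 2 + y ^ 2) * (1 - a * t ^ (m + 1)) ^ p)
      (2 * x * g ^ p + (x ^ 2 + y ^ 2) * (-(a * (m + 1) * x ^ m) * p * g ^ (p - 1))) x := by
    refine (((hasDerivAt_pow 2 x).add_const (y ^ 2)).mul
      (hasDerivAt_one_sub_mul_pow_rpow m a p x hxy.ne')).congr_deriv ?_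
    push_cast
    ring
  have hdy : HasDerivAt (fun t : ℝ => (x ^ 2 + t ^ 2) * g ^ p) (2 * y * g ^ p) y := by
    refine (((hasDerivAt_pow 2 y).const_add (x ^ 2)).mul_const (g ^ p)).congr_deriv ?_
    push_cast
    ring
  rw [hdx.deriv, hdy.deriv, rpow_sub_one hxy.ne', hp]
  have hm : (m : ℝ) + 1 ≠ 0 := by positivity
  field_simp
  ring
end

section
/- Let n ≥ 2 be an integer and a ∈ ℝ. On the open set U = {(x,y) ∈ ℝ² : 1 − a·x^(n−1) > 0}, define u(x,y) = x·(1 − a·x^(n−1))^(−1/(n−1)) and v(x,y) = y·(1 − a·x^(n−1))^(−1/(n−1)). Then for every (x,y) ∈ U, with X₁ = −y + a·x^(n−1)·y and X₂ = x + a·x^(n−2)·y², one has X₁·∂u/∂x + X₂·∂u/∂y = −v(x,y) and X₁·∂v/∂x + X₂·∂v/∂y = u(x,y). Thus (u,v) is a linearizing change of coordinates bringing the system ẋ = −y + a·x^(n−1)·y, ẏ = x + a·x^(n−2)·y² to the linear center u̇ = −v, v̇ = u. -/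
/-- `u(x,y) = x(1 − a x^(n−1))^(−1/(n−1))`, `v(x,y) = y(1 − a x^(n−1))^(−1/(n−1))`
linearize the system `ẋ = −y + a x^(n−1) y, ẏ = x + a x^(n−2) y²` to the linear
center `u̇ = −v, v̇ = u` on the set where `1 − a x^(n−1) > 0`. -/
theorem stmt_2 (n : ℕ) (hn : 2 ≤ n) (a : ℝ) (x y : ℝ)
    (hxy : 1 - a * x ^ (n - 1) > 0) :
    ((-y + a * x ^ (n - 1) * y) *
        deriv (fun t : ℝ => t * (1 - a * t ^ (n - 1)) ^ (-(1 / ((n : ℝ) - 1)))) x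
      + (x + a * x ^ (n - 2) * y ^ 2) *
        deriv (fun t : ℝ => x * (1 - a * x ^ (n - 1)) ^ (-(1 / ((n : ℝ) - 1)))) y
      = -(y * (1 - a * x ^ (n - 1)) ^ (-(1 / ((n : ℝ) - 1)))))
    ∧ ((-y + a * x ^ (n - 1) * y) *
        deriv (fun t : ℝ => y * (1 - a * t ^ (n - 1)) ^ (-(1 / ((n : ℝ) - 1)))) x
      + (x + a * x ^ (n - 2) * y ^ 2) *
        deriv (fun t : ℝ => t * (1 - a * x ^ (n - 1)) ^ (-(1 / ((n : ℝ) - 1)))) y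
      = x * (1 - a * x ^ (n - 1)) ^ (-(1 / ((n : ℝ) - 1)))) := by
  set p : ℝ := -(1 / ((n : ℝ) - 1)) with hp
  set c : ℝ := 1 - a * x ^ (n - 1) with hc
  have hc0 : c ≠ 0 := ne_of_gt hxy
  have hn1 : ((n : ℝ) - 1) ≠ 0 := by
    have : (2 : ℝ) ≤ n := by exact_mod_cast hn
    linarith
  have hcast : ((n - 1 : ℕ) : ℝ) = (n : ℝ) - 1 := by
    have : 1 ≤ n := le_trans (by norm_num) hn
    push_cast [this]; ring
  have hsub : n - 1 - 1 = n - 2 := by omega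
  -- derivative of g t = 1 - a * t^(n-1)
  have hg : HasDerivAt (fun t : ℝ => 1 - a * t ^ (n - 1))
      (-(a * (((n : ℝ) - 1) * x ^ (n - 2)))) x := by
    have := ((hasDerivAt_pow (n - 1) x).const_mul a).const_sub 1
    simpa [hsub, hcast, mul_assoc] using this
  have hgp : HasDerivAt (fun t : ℝ => (1 - a * t ^ (n - 1)) ^ p)
      (-(a * (((n : ℝ) - 1) * x ^ (n - 2))) * p * c ^ (p - 1)) x :=
    hg.rpow_const (Or.inl hc0)
  -- key simplification of the derivative coefficient
  have hcoef2 : -(a * (((n : ℝ) - 1) * x ^ (n - 2))) * p = a * x ^ (n - 2) := by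
    have h := mul_one_div_cancel hn1
    calc -(a * (((n : ℝ) - 1) * x ^ (n - 2))) * p
        = a * x ^ (n - 2) * (((n : ℝ) - 1) * (1 / ((n : ℝ) - 1))) := by rw [hp]; ring
      _ = a * x ^ (n - 2) := by rw [h, mul_one]
  rw [hcoef2] at hgp
  have hxpow : x ^ (n - 2) * x = x ^ (n - 1) := by
    rw [← pow_succ]; congr 1; omega
  have hcp : c ^ (p - 1) * c = c ^ p := by
    nth_rewrite 2 [show c = c ^ (1:ℝ) from (Real.rpow_one c).symm]
    rw [← Real.rpow_add hxy]; ring_nf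
  -- derivative of u(t) = t * g(t)^p
  have hu : HasDerivAt (fun t : ℝ => t * (1 - a * t ^ (n - 1)) ^ p)
      (1 * c ^ p + x * (a * x ^ (n - 2) * c ^ (p - 1))) x :=
    (hasDerivAt_id x).mul hgp
  have hu' : deriv (fun t : ℝ => t * (1 - a * t ^ (n - 1)) ^ p) x = c ^ (p - 1) := by
    rw [hu.deriv, one_mul]
    have h2 : x * (a * x ^ (n - 2) * c ^ (p - 1)) = a * x ^ (n - 1) * c ^ (p - 1) := by
      rw [← hxpow]; ring
    rw [h2, ← hcp, hc]; ring
  have hv : HasDerivAt (fun t : ℝ => y * (1 - a * t ^ (n - 1)) ^ p)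
      (y * (a * x ^ (n - 2) * c ^ (p - 1))) x := hgp.const_mul y
  have hv' : deriv (fun t : ℝ => y * (1 - a * t ^ (n - 1)) ^ p) x
      = y * (a * x ^ (n - 2) * c ^ (p - 1)) := hv.deriv
  have hconst : deriv (fun _ : ℝ => x * c ^ p) y = 0 := deriv_const y _
  have hlin : deriv (fun t : ℝ => t * c ^ p) y = c ^ p := by
    simpa using (((hasDerivAt_id y).mul_const (c ^ p)).deriv)
  constructor
  · rw [hu', hconst, mul_zero, add_zero]
    have : -y + a * x ^ (n-1) * y = -(y * c) := by rw [hc]; ring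
    rw [this, ← hcp]; ring
  · rw [hv', hlin]
    have h1 : -y + a * x ^ (n-1) * y = -(y * c) := by rw [hc]; ring
    rw [h1]
    have : -(y*c) * (y * (a * x ^ (n-2) * c ^ (p-1))) = -(a * x^(n-2) * y^2) * (c ^ (p-1) * c) := by ring
    rw [this, hcp]; ring
end

section
/- Let n ≥ 2 be an integer, b ∈ ℝ, and set c = −(n−1)·b/n². Define H(x,y) = (x²·(1 + c·x^(n−1))² + y²) / ((n−1)²·(n−1 + n·c·x^(n−1))^(2n/(n−1))) on the open set U = {(x,y) ∈ ℝ² : n−1 + n·c·x^(n−1) > 0}. Then for every (x,y) ∈ U, (−y + (b/n)·x^(n−1)·y)·∂H/∂x + (x + b·x^(n−2)·y² − ((n−1)·b/n²)·x^n)·∂H/∂y = 0, i.e. H is a first integral of the system ẋ = −y + (b/n)·x^(n−1)·y, ẏ = x + b·x^(n−2)·y² − ((n−1)·b/n²)·x^n. -/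
/-!
Write `H = N / ((n-1)² g^α)` with `g = n-1 + n c x^(n-1)` and `α = 2n/(n-1)`. Since
`(g^α)' = α g' g^α / g`, the Lie derivative of `H` along the field is
`(P (N_x g - α g' N) + Q N_y g) / ((n-1)² g^α g)`. The exponent is chosen so that
`α g' = 2n² c x^(n-2)` is a polynomial, and with `c = -(n-1) b / n²` the numerator is a
polynomial in `x, y, x^(n-2)` that vanishes identically.
-/

open Real

theorem hasDerivAt_div_const_mul_rpow {N g : ℝ → ℝ} {N' g' K α x : ℝ}
    (hN : HasDerivAt N N' x) (hg : HasDerivAt g g' x) (hgx : 0 < g x) (hK : K ≠ 0) :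
    HasDerivAt (fun t => N t / (K * g t ^ α))
      ((N' * g x - α * g' * N x) / (K * g x ^ α * g x)) x := by
  have hD := (hg.rpow_const (p := α) (Or.inl hgx.ne')).const_mul K
  have hDx : K * g x ^ α ≠ 0 := mul_ne_zero hK (rpow_pos_of_pos hgx α).ne'
  refine (hN.div hD hDx).congr_deriv ?_
  have hsplit : g x ^ α = g x ^ (α - 1) * g x := by
    rw [← rpow_add_one hgx.ne', sub_add_cancel]
  rw [hsplit]
  have := (rpow_pos_of_pos hgx (α - 1)).ne'
  field_simp

theorem hasDerivAt_pow_pred {𝕜 : Type*} [NontriviallyNormedField 𝕜] {n : ℕ} (hn : 1 ≤ n)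
    (x : 𝕜) : HasDerivAt (fun t : 𝕜 => t ^ (n - 1)) (((n : 𝕜) - 1) * x ^ (n - 2)) x :=
  (hasDerivAt_pow (n - 1) x).congr_deriv (by rw [Nat.cast_sub hn, Nat.cast_one, Nat.sub_sub])

/-- Here `ν` stands for `n` and `u` for `x^(n-2)`, so that `x^(n-1) = x u` and `xⁿ = x² u`. -/
theorem first_integral_identity {ν b c : ℝ} (hν : ν ≠ 0) (hν1 : ν - 1 ≠ 0)
    (hc : c = -((ν - 1) * b) / ν ^ 2) (x y u : ℝ) :
    (-y + b / ν * (x * u) * y) *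
        ((2 * x * (1 + c * (x * u)) ^ 2 + x ^ 2 * (2 * (1 + c * (x * u)) * (c * ((ν - 1) * u))))
            * (ν - 1 + ν * c * (x * u))
          - 2 * ν / (ν - 1) * (ν * c * ((ν - 1) * u)) * (x ^ 2 * (1 + c * (x * u)) ^ 2 + y ^ 2))
      + (x + b * u * y ^ 2 - (ν - 1) * b / ν ^ 2 * (x ^ 2 * u)) * (2 * y)
          * (ν - 1 + ν * c * (x * u)) = 0 := by
  have hαg' : 2 * ν / (ν - 1) * (ν * c * ((ν - 1) * u)) = 2 * ν ^ 2 * c * u := by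
    rw [div_mul_eq_mul_div, div_eq_iff hν1]
    ring
  rw [hαg', hc]
  field_simp
  ring

theorem mul_div_add_mul_div_eq_zero {K : Type*} [Field K] {P Q A B D g : K} (hD : D ≠ 0) (hg : g ≠ 0)
    (h : P * A + Q * B * g = 0) : P * (A / (D * g)) + Q * (B / D) = 0 := by
  rw [← zero_div (D * g), ← h]
  field_simp

/-- With `c = −(n−1)b/n²`, the function
`H(x,y) = (x²(1 + c x^(n−1))² + y²)/((n−1)²(n−1 + n c x^(n−1))^(2n/(n−1)))`
is a first integral of the system
`ẋ = −y + (b/n) x^(n−1) y, ẏ = x + b x^(n−2) y² − ((n−1)b/n²) xⁿ`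
on the set where `n−1 + n c x^(n−1) > 0`. -/
theorem stmt_3 (n : ℕ) (hn : 2 ≤ n) (b c : ℝ)
    (hc : c = -(((n : ℝ) - 1) * b) / (n : ℝ) ^ 2) (x y : ℝ)
    (hxy : (n : ℝ) - 1 + (n : ℝ) * c * x ^ (n - 1) > 0) :
    (-y + (b / (n : ℝ)) * x ^ (n - 1) * y) *
        deriv (fun t : ℝ =>
          (t ^ 2 * (1 + c * t ^ (n - 1)) ^ 2 + y ^ 2) /
            (((n : ℝ) - 1) ^ 2 *
              ((n : ℝ) - 1 + (n : ℝ) * c * t ^ (n - 1)) ^ (2 * (n : ℝ) / ((n : ℝ) - 1)))) x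
      + (x + b * x ^ (n - 2) * y ^ 2 - (((n : ℝ) - 1) * b / (n : ℝ) ^ 2) * x ^ n) *
        deriv (fun t : ℝ =>
          (x ^ 2 * (1 + c * x ^ (n - 1)) ^ 2 + t ^ 2) /
            (((n : ℝ) - 1) ^ 2 *
              ((n : ℝ) - 1 + (n : ℝ) * c * x ^ (n - 1)) ^ (2 * (n : ℝ) / ((n : ℝ) - 1)))) y
      = 0 := by
  have hν1 : 0 < (n : ℝ) - 1 := by
    have : (2 : ℝ) ≤ n := by exact_mod_cast hn
    linarith
  have hν : (n : ℝ) ≠ 0 := by positivity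
  set α : ℝ := 2 * (n : ℝ) / ((n : ℝ) - 1)
  set g : ℝ := (n : ℝ) - 1 + (n : ℝ) * c * x ^ (n - 1) with hg_def
  have hp := hasDerivAt_pow_pred (by omega : 1 ≤ n) x
  have hN : HasDerivAt (fun t : ℝ => t ^ 2 * (1 + c * t ^ (n - 1)) ^ 2 + y ^ 2)
      (2 * x * (1 + c * x ^ (n - 1)) ^ 2
        + x ^ 2 * (2 * (1 + c * x ^ (n - 1)) * (c * (((n : ℝ) - 1) * x ^ (n - 2))))) x := by
    refine (((hasDerivAt_pow 2 x).mul (((hp.const_mul c).const_add 1).pow 2)).add_const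
      (y ^ 2)).congr_deriv ?_
    norm_num
  have hg := (hp.const_mul ((n : ℝ) * c)).const_add ((n : ℝ) - 1)
  have hx := hasDerivAt_div_const_mul_rpow (α := α) hN hg hxy (pow_pos hν1 2).ne'
  have hy := ((hasDerivAt_pow 2 y).const_add (x ^ 2 * (1 + c * x ^ (n - 1)) ^ 2)).div_const
    (((n : ℝ) - 1) ^ 2 * g ^ α)
  rw [hx.deriv, hy.deriv]
  have hpow_pred : x ^ (n - 1) = x * x ^ (n - 2) := by rw [← pow_succ']; congr 1; omega
  have hpow : x ^ n = x ^ 2 * x ^ (n - 2) := by rw [← pow_add]; congr 1; omega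
  have key := first_integral_identity hν hν1.ne' hc x y (x ^ (n - 2))
  rw [← hpow_pred, ← hpow, ← hg_def] at key
  have hD := (mul_pos (pow_pos hν1 2) (rpow_pos_of_pos hxy α)).ne'
  exact mul_div_add_mul_div_eq_zero hD hxy.ne' (by norm_num; exact key)
end

section
/- Let n ≥ 2 be an integer. For every real x with 0 < |x| < 2^(−1/(n−1)), set X = x·(1 − 2·x^(n−1))^(−1/(2n−2)) and h(X) = X^(n−1)/√(1 + X^(2n−2)). Then h(X) = x^(n−1)/(1 − x^(n−1)) and X/(1 + h(X)) = x·(1 − x^(n−1))·(1 − 2·x^(n−1))^(−1/(2n−2)); in particular X/(1 + h(X)) = g(x)·e^(F(x)), where g(x) = (1 − 2x^(n−1))(x − x^n) and e^(F(x)) = (1 − 2x^(n−1))^((1−2n)/(2n−2)). -/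
/-!
Write `s = x^(n-1)` and `t = 1 - 2s`; the bound on `|x|` gives `|s| < 1/2`, so `t > 0` and
`1 - s > 0`. Then `X^(n-1) = s/√t`, and the Urabe function collapses because
`1 + s²/t = (1 - s)²/t` is a perfect square: `h(X) = s/(1 - s)`, i.e. `1 + h(X) = 1/(1 - s)`.
The remaining identities are `x - xⁿ = x(1 - s)` and `t^((1-2n)/(2n-2)) = t⁻¹ · t^(-1/(2n-2))`.
-/

open Real

lemma Real.rpow_div_natCast_pow {a : ℝ} (ha : 0 ≤ a) {m : ℕ} (hm : m ≠ 0) (y : ℝ) :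
    (a ^ (y / m)) ^ m = a ^ y := by
  rw [← rpow_natCast, ← rpow_mul ha, div_mul_cancel₀ y (Nat.cast_ne_zero.mpr hm)]

lemma abs_pow_lt_inv_of_abs_lt_rpow {a x : ℝ} (ha : 0 ≤ a) {m : ℕ} (hm : m ≠ 0)
    (hx : |x| < a ^ (-(1 / (m : ℝ)))) : |x ^ m| < a⁻¹ := by
  calc |x ^ m| = |x| ^ m := abs_pow x m
    _ < (a ^ (-1 / (m : ℝ))) ^ m := by rw [neg_div]; exact pow_lt_pow_left₀ hx (abs_nonneg x) hm
    _ = a⁻¹ := by rw [rpow_div_natCast_pow ha hm, rpow_neg_one]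

lemma rpow_neg_one_div_two_mul_pow {t : ℝ} (ht : 0 ≤ t) {m : ℕ} (hm : m ≠ 0) :
    (t ^ (-(1 / (2 * (m : ℝ))))) ^ m = (√t)⁻¹ := by
  rw [div_mul_eq_div_div, ← neg_div, rpow_div_natCast_pow ht hm, rpow_neg ht, sqrt_eq_rpow]

lemma div_sqrt_one_add_sq_of_eq_div_sqrt {Y s : ℝ} (hs : s < 1 / 2)
    (hY : Y = s / √(1 - 2 * s)) : Y / √(1 + Y ^ 2) = s / (1 - s) := by
  have ht : 0 < 1 - 2 * s := by linarith
  have h1s : 0 < 1 - s := by linarith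
  have hsq : 1 + Y ^ 2 = (1 - s) ^ 2 / (1 - 2 * s) := by
    rw [hY, div_pow, sq_sqrt ht.le, eq_div_iff ht.ne', add_mul, div_mul_cancel₀ _ ht.ne']
    ring
  have hsqrt_pos : 0 < √(1 - 2 * s) := sqrt_pos.mpr ht
  rw [hsq, sqrt_div' _ ht.le, sqrt_sq h1s.le, hY, div_div_div_cancel_right₀ hsqrt_pos.ne']

lemma mul_rpow_neg_one_add {t : ℝ} (ht : 0 < t) (r : ℝ) : t * t ^ (-1 + r) = t ^ r := by
  rw [rpow_add ht, rpow_neg_one, ← mul_assoc, mul_inv_cancel₀ ht.ne', one_mul]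

theorem stmt_6_general (n : ℕ) (hn : 2 ≤ n) (x : ℝ)
    (hx : |x| < (2 : ℝ) ^ (-(1 / ((n : ℝ) - 1)))) (X h : ℝ)
    (hX : X = x * (1 - 2 * x ^ (n - 1)) ^ (-(1 / (2 * (n : ℝ) - 2))))
    (hh : h = X ^ (n - 1) / Real.sqrt (1 + X ^ (2 * n - 2))) :
    h = x ^ (n - 1) / (1 - x ^ (n - 1)) ∧
    X / (1 + h) =
      x * (1 - x ^ (n - 1)) * (1 - 2 * x ^ (n - 1)) ^ (-(1 / (2 * (n : ℝ) - 2))) ∧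
    X / (1 + h) =
      ((1 - 2 * x ^ (n - 1)) * (x - x ^ n)) *
        (1 - 2 * x ^ (n - 1)) ^ ((1 - 2 * (n : ℝ)) / (2 * (n : ℝ) - 2)) := by
  obtain ⟨m, rfl⟩ : ∃ m, n = m + 1 := ⟨n - 1, by omega⟩
  have hm : m ≠ 0 := by omega
  simp only [Nat.add_sub_cancel, Nat.cast_add, Nat.cast_one, add_sub_cancel_right,
    show 2 * (m + 1) - 2 = 2 * m by omega, show 2 * ((m : ℝ) + 1) - 2 = 2 * m by ring] at hx hX hh ⊢
  set s := x ^ m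
  have hs : s < 1 / 2 := by
    have := abs_pow_lt_inv_of_abs_lt_rpow zero_le_two hm hx
    linarith [le_abs_self s]
  have ht : 0 < 1 - 2 * s := by linarith
  have h1s : 0 < 1 - s := by linarith
  have hXm : X ^ m = s / √(1 - 2 * s) := by
    rw [hX, mul_pow, rpow_neg_one_div_two_mul_pow ht.le hm, div_eq_mul_inv]
  have hh' : h = s / (1 - s) := by
    rw [hh, pow_mul', div_sqrt_one_add_sq_of_eq_div_sqrt hs hXm]
  have hdiv : X / (1 + h) = x * (1 - s) * (1 - 2 * s) ^ (-(1 / (2 * (m : ℝ)))) := by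
    rw [hh', hX]
    field_simp
    ring
  refine ⟨hh', hdiv, hdiv.trans ?_⟩
  rw [pow_succ, show (1 - 2 * ((m : ℝ) + 1)) / (2 * m) = -1 + -(1 / (2 * (m : ℝ))) by
    field_simp; ring, ← mul_rpow_neg_one_add ht]
  ring

/-- For `0 < |x| < 2^(−1/(n−1))`, with `X = x(1 − 2x^(n−1))^(−1/(2n−2))` and
`h(X) = X^(n−1)/√(1 + X^(2n−2))`, one has `h(X) = x^(n−1)/(1 − x^(n−1))` and
`X/(1 + h(X)) = x(1 − x^(n−1))(1 − 2x^(n−1))^(−1/(2n−2)) = g(x)e^{F(x)}`, where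
`g(x) = (1 − 2x^(n−1))(x − xⁿ)` and `e^{F(x)} = (1 − 2x^(n−1))^((1−2n)/(2n−2))`. -/
theorem stmt_6 (n : ℕ) (hn : 2 ≤ n) (x : ℝ) (hx0 : 0 < |x|)
    (hx : |x| < (2 : ℝ) ^ (-(1 / ((n : ℝ) - 1)))) (X h : ℝ)
    (hX : X = x * (1 - 2 * x ^ (n - 1)) ^ (-(1 / (2 * (n : ℝ) - 2))))
    (hh : h = X ^ (n - 1) / Real.sqrt (1 + X ^ (2 * n - 2))) :
    h = x ^ (n - 1) / (1 - x ^ (n - 1)) ∧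
    X / (1 + h) =
      x * (1 - x ^ (n - 1)) * (1 - 2 * x ^ (n - 1)) ^ (-(1 / (2 * (n : ℝ) - 2))) ∧
    X / (1 + h) =
      ((1 - 2 * x ^ (n - 1)) * (x - x ^ n)) *
        (1 - 2 * x ^ (n - 1)) ^ ((1 - 2 * (n : ℝ)) / (2 * (n : ℝ) - 2)) :=
  stmt_6_general n hn x hx X h hX hh
end

section
/- Let n ≥ 2 be an integer and b ∈ ℝ. Define H(x,y) = (x² + y²)^(n−1)/(2b·x^(n−1) − 1) on the open set U = {(x,y) ∈ ℝ² : 2b·x^(n−1) ≠ 1}. Then for every (x,y) ∈ U, (−y + 2b·x^(n−1)·y)·∂H/∂x(x,y) + (x + b·x^(n−2)·y² − b·x^n)·∂H/∂y(x,y) = 0, i.e. H is a first integral of the system ẋ = −y + 2b·x^(n−1)·y, ẏ = x + b·x^(n−2)·y² − b·x^n. -/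
/-! Write `H = Rᵐ / D` with `R = x² + y²`, `D = 2b xᵐ − 1`, `m = n − 1`. Both partial derivatives
of `H` carry the factor `m Rᵐ⁻¹ / D`, and the orbital derivative is that factor times
`2y (x D − b R xᵐ⁻¹ + ẏ)`, whose bracket cancels identically once `xᵐ⁻¹ = xⁿ⁻²`. -/

theorem hasDerivAt_sq_add_sq_pow_div_fst (b : ℝ) (m : ℕ) {x : ℝ} (y : ℝ)
    (hx : 2 * b * x ^ m - 1 ≠ 0) :
    HasDerivAt (fun t => (t ^ 2 + y ^ 2) ^ m / (2 * b * t ^ m - 1))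
      ((m * (x ^ 2 + y ^ 2) ^ (m - 1) * (2 * x) * (2 * b * x ^ m - 1)
        - (x ^ 2 + y ^ 2) ^ m * (2 * b * (m * x ^ (m - 1)))) / (2 * b * x ^ m - 1) ^ 2) x := by
  have hnum := ((hasDerivAt_pow 2 x).add_const (y ^ 2)).pow m
  have hden := ((hasDerivAt_pow m x).const_mul (2 * b)).sub_const 1
  exact (hnum.div hden hx).congr_deriv (by norm_num)

theorem hasDerivAt_sq_add_sq_pow_div_snd (b : ℝ) (m : ℕ) (x : ℝ) {y : ℝ} :
    HasDerivAt (fun t => (x ^ 2 + t ^ 2) ^ m / (2 * b * x ^ m - 1))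
      (m * (x ^ 2 + y ^ 2) ^ (m - 1) * (2 * y) / (2 * b * x ^ m - 1)) y :=
  ((((hasDerivAt_pow 2 y).const_add (x ^ 2)).pow m).div_const _).congr_deriv (by norm_num)

/-- `H(x,y) = (x² + y²)^(n−1)/(2b x^(n−1) − 1)` is a first integral of the
system `ẋ = −y + 2b x^(n−1) y, ẏ = x + b x^(n−2) y² − b xⁿ` on the set where
`2b x^(n−1) ≠ 1`. -/
theorem stmt_7 (n : ℕ) (hn : 2 ≤ n) (b : ℝ) (x y : ℝ)
    (hxy : 2 * b * x ^ (n - 1) ≠ 1) :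
    (-y + 2 * b * x ^ (n - 1) * y) *
        deriv (fun t : ℝ => (t ^ 2 + y ^ 2) ^ (n - 1) / (2 * b * t ^ (n - 1) - 1)) x
      + (x + b * x ^ (n - 2) * y ^ 2 - b * x ^ n) *
        deriv (fun t : ℝ => (x ^ 2 + t ^ 2) ^ (n - 1) / (2 * b * x ^ (n - 1) - 1)) y
      = 0 := by
  have hD : 2 * b * x ^ (n - 1) - 1 ≠ 0 := sub_ne_zero_of_ne hxy
  rw [(hasDerivAt_sq_add_sq_pow_div_fst b (n - 1) y hD).deriv,
    (hasDerivAt_sq_add_sq_pow_div_snd b (n - 1) x).deriv]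
  obtain ⟨m, rfl⟩ : ∃ m, n = m + 2 := ⟨n - 2, by omega⟩
  simp only [Nat.add_sub_cancel, show m + 2 - 1 = m + 1 by omega, Nat.add_one_sub_one]
  field_simp
  ring
end

section
/- Let b₀₂, b₃₀ ∈ ℝ. Set Ã(x) = 1 − b₀₂·x + (3/2)·b₃₀·x² − b₀₂·b₃₀·x³, B̃(x) = x + b₃₀·x³, C̃(x) = b₀₂ − (9/2)·b₃₀·x + 3·b₀₂·b₃₀·x², and define f(x) = −(Ã′(x) − C̃(x))/Ã(x), g(x) = Ã(x)·B̃(x). Then there is a neighborhood of 0 on which g′(x) + f(x)·g(x) = 1 for all x. -/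
/-! The product rule turns `g′ + f g` into `Ã B̃′ + C̃ B̃`, because the `Ã′ B̃` terms cancel once
`Ã ≠ 0`; for the case II coefficients, `Ã B̃′ + C̃ B̃ = 1` is a polynomial identity, and
`Ã(0) = 1` keeps `Ã` nonzero near `0`. -/

open Filter Topology

theorem lienard_deriv_add_mul_eq {A B C f g : ℝ → ℝ} {x : ℝ}
    (hA : DifferentiableAt ℝ A x) (hB : DifferentiableAt ℝ B x) (hAx : A x ≠ 0)
    (hf : f x = -(deriv A x - C x) / A x) (hg : g = fun y => A y * B y) :
    deriv g x + f x * g x = A x * deriv B x + C x * B x := by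
  rw [hg, deriv_fun_mul hA hB, hf]
  field_simp
  ring

theorem exists_pos_forall_abs_lt_of_eventually_nhds_zero {P : ℝ → Prop}
    (h : ∀ᶠ x in 𝓝 0, P x) : ∃ ε > (0 : ℝ), ∀ x : ℝ, |x| < ε → P x := by
  obtain ⟨ε, hε, hball⟩ := Metric.eventually_nhds_iff.mp h
  exact ⟨ε, hε, fun x hx => hball (by rwa [Real.dist_eq, sub_zero])⟩

/-- Zero-Urabe-function isochronicity identity: with `Ã`, `B̃`, `C̃` as below and the
Liénard data `f(x) = −(Ã′(x) − C̃(x))/Ã(x)`, `g(x) = Ã(x)·B̃(x)`, the identity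
`g′(x) + f(x)·g(x) = 1` holds on a neighborhood of `0`. -/
theorem stmt_8 (b02 b30 : ℝ) (A B C f g : ℝ → ℝ)
    (hA : ∀ x : ℝ, A x = 1 - b02*x + (3/2)*b30*x^2 - b02*b30*x^3)
    (hB : ∀ x : ℝ, B x = x + b30*x^3)
    (hC : ∀ x : ℝ, C x = b02 - (9/2)*b30*x + 3*b02*b30*x^2)
    (hf : ∀ x : ℝ, f x = -(deriv A x - C x) / A x)
    (hg : ∀ x : ℝ, g x = A x * B x) :
    ∃ ε > (0 : ℝ), ∀ x : ℝ, |x| < ε → deriv g x + f x * g x = 1 := by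
  have hA_eq : A = fun x => 1 - b02*x + (3/2)*b30*x^2 - b02*b30*x^3 := funext hA
  have hB' (x : ℝ) : HasDerivAt B (1 + 3*b30*x^2) x := by
    rw [funext hB]
    exact ((hasDerivAt_id' x).fun_add ((hasDerivAt_pow 3 x).const_mul b30)).congr_deriv (by ring)
  have hA_ne : ∀ᶠ x in 𝓝 0, A x ≠ 0 :=
    (show ContinuousAt A 0 by rw [hA_eq]; fun_prop).eventually_ne (by norm_num [hA])
  refine exists_pos_forall_abs_lt_of_eventually_nhds_zero (hA_ne.mono fun x hAx => ?_)
  rw [lienard_deriv_add_mul_eq (by rw [hA_eq]; fun_prop) (hB' x).differentiableAt hAx (hf x)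
    (funext hg), (hB' x).deriv, hA x, hB x, hC x]
  ring
end

section
/- Let b₀₂, b₂₀, a₂₁ ∈ ℝ. Set Ã(x) = 1 − (b₀₂ + 2b₂₀)·x − a₂₁·x² − (b₂₀·a₂₁ − b₀₂·b₂₀² − 4·b₂₀³)·x³, B̃(x) = x + b₂₀·x², C̃(x) = b₀₂ + (a₂₁ + b₀₂·b₂₀ + 4·b₂₀²)·x + (2·b₂₀·a₂₁ − 2·b₀₂·b₂₀² − 8·b₂₀³)·x², and define f(x) = −(Ã′(x) − C̃(x))/Ã(x), g(x) = Ã(x)·B̃(x). Then there is a neighborhood of 0 on which g′(x) + f(x)·g(x) = 1 for all x. -/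
/-! For `g = A B` and `f = -(A' - C) / A` the `A' B` terms cancel, so `g' + f g = A B' + C B`
wherever `A ≠ 0`; for the given polynomials this is identically `1`, and `A 0 = 1` keeps `A`
nonzero near `0`. -/

theorem deriv_mul_add_lienard_eq {A B C : ℝ → ℝ} {x : ℝ} (hA : DifferentiableAt ℝ A x)
    (hB : DifferentiableAt ℝ B x) (hAx : A x ≠ 0) :
    deriv (fun y => A y * B y) x + -(deriv A x - C x) / A x * (A x * B x)
      = A x * deriv B x + C x * B x := by
  rw [deriv_fun_mul hA hB]
  field_simp
  ring

/-- Zero-Urabe-function isochronicity identity: with `Ã`, `B̃`, `C̃` as below and the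
Liénard data `f(x) = −(Ã′(x) − C̃(x))/Ã(x)`, `g(x) = Ã(x)·B̃(x)`, the identity
`g′(x) + f(x)·g(x) = 1` holds on a neighborhood of `0`. -/
theorem stmt_9 (b02 b20 a21 : ℝ) (A B C f g : ℝ → ℝ)
    (hA : ∀ x : ℝ, A x = 1 - (b02 + 2*b20)*x - a21*x^2 - (b20*a21 - b02*b20^2 - 4*b20^3)*x^3)
    (hB : ∀ x : ℝ, B x = x + b20*x^2)
    (hC : ∀ x : ℝ, C x = b02 + (a21 + b02*b20 + 4*b20^2)*x + (2*b20*a21 - 2*b02*b20^2 - 8*b20^3)*x^2)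
    (hf : ∀ x : ℝ, f x = -(deriv A x - C x) / A x)
    (hg : ∀ x : ℝ, g x = A x * B x) :
    ∃ ε > (0 : ℝ), ∀ x : ℝ, |x| < ε → deriv g x + f x * g x = 1 := by
  have hA_diff : Differentiable ℝ A := by rw [funext hA]; fun_prop
  have hB_deriv (x : ℝ) : HasDerivAt B (1 + 2 * b20 * x) x := by
    rw [funext hB]
    exact ((hasDerivAt_id' x).add ((hasDerivAt_pow 2 x).const_mul b20)).congr_deriv (by ring)
  have hA_zero : A 0 ≠ 0 := by simp [hA]
  obtain ⟨ε, hε, hA_ne⟩ :=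
    Metric.eventually_nhds_iff.1 (hA_diff.continuous.continuousAt.eventually_ne hA_zero)
  refine ⟨ε, hε, fun x hx => ?_⟩
  rw [hf, hg x, funext hg, deriv_mul_add_lienard_eq (hA_diff x) (hB_deriv x).differentiableAt
    (hA_ne (by simpa using hx)), (hB_deriv x).deriv, hA, hB, hC]
  ring
end

section
/- Let b ∈ ℝ. Set Ã(x) = 1 − (2/3)·b²·x² + (4/3)·b³·x³, B̃(x) = x + b·x², C̃(x) = −2b + (8/3)·b²·x − (8/3)·b³·x², and define f(x) = −(Ã′(x) − C̃(x))/Ã(x), g(x) = Ã(x)·B̃(x). Then there is a neighborhood of 0 on which g′(x) + f(x)·g(x) = 1 for all x. -/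
/-! Since `g = Ã·B̃`, the product rule gives `g′ + f·g = Ã′B̃ + ÃB̃′ − (Ã′ − C̃)B̃ = ÃB̃′ + C̃B̃`
wherever `Ã ≠ 0`, and for the given polynomials `ÃB̃′ + C̃B̃ = 1` identically. Since `Ã(0) = 1`,
`Ã` does not vanish near `0`. -/

theorem deriv_mul_add_damping_mul_eq {𝕜 : Type*} [NontriviallyNormedField 𝕜] {A B C : 𝕜 → 𝕜}
    {x : 𝕜} (hA : DifferentiableAt 𝕜 A x) (hB : DifferentiableAt 𝕜 B x) (hAx : A x ≠ 0) :
    deriv (A * B) x + -(deriv A x - C x) / A x * (A x * B x) = A x * deriv B x + C x * B x := by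
  rw [deriv_mul hA hB]
  field_simp
  ring

/-- Zero-Urabe-function isochronicity identity: with `Ã`, `B̃`, `C̃` as below and the
Liénard data `f(x) = −(Ã′(x) − C̃(x))/Ã(x)`, `g(x) = Ã(x)·B̃(x)`, the identity
`g′(x) + f(x)·g(x) = 1` holds on a neighborhood of `0`. -/
theorem stmt_10 (b : ℝ) (A B C f g : ℝ → ℝ)
    (hA : ∀ x : ℝ, A x = 1 - (2/3)*b^2*x^2 + (4/3)*b^3*x^3)
    (hB : ∀ x : ℝ, B x = x + b*x^2)
    (hC : ∀ x : ℝ, C x = -2*b + (8/3)*b^2*x - (8/3)*b^3*x^2)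
    (hf : ∀ x : ℝ, f x = -(deriv A x - C x) / A x)
    (hg : ∀ x : ℝ, g x = A x * B x) :
    ∃ ε > (0 : ℝ), ∀ x : ℝ, |x| < ε → deriv g x + f x * g x = 1 := by
  have hA_diff : Differentiable ℝ A := by rw [funext hA]; fun_prop
  have hB_diff : Differentiable ℝ B := by rw [funext hB]; fun_prop
  have hB_deriv (x : ℝ) : deriv B x = 1 + 2*b*x := by
    rw [funext hB]
    exact (((hasDerivAt_id' x).add ((hasDerivAt_pow 2 x).const_mul b)).congr_deriv (by ring)).deriv
  obtain ⟨ε, hε, hA_ne⟩ := Metric.eventually_nhds_iff.1 <|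
    hA_diff.continuous.continuousAt.eventually_ne (x := 0) (y := 0) (by simp [hA])
  refine ⟨ε, hε, fun x hx => ?_⟩
  have hAx : A x ≠ 0 := hA_ne (by simpa [Real.dist_eq] using hx)
  rw [show g = A * B from funext hg, hf, Pi.mul_apply,
    deriv_mul_add_damping_mul_eq (hA_diff x) (hB_diff x) hAx, hB_deriv, hA, hB, hC]
  ring
end

section
/- Let b ∈ ℝ. Set Ã(x) = 1 − (1/4)·b³·x³, B̃(x) = x − (1/2)·b·x², C̃(x) = b + (1/2)·b²·x + (1/2)·b³·x², and define f(x) = −(Ã′(x) − C̃(x))/Ã(x), g(x) = Ã(x)·B̃(x). Then there is a neighborhood of 0 on which g′(x) + f(x)·g(x) = 1 for all x. -/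
/-!
Where `Ã(x) ≠ 0` the Liénard data satisfy `g′ + f·g = (Ã·B̃)′ − (Ã′ − C̃)·B̃ = Ã·B̃′ + C̃·B̃`,
and for the case IV polynomials this expression is identically `1`. Since `Ã(0) = 1`, continuity
keeps `Ã` away from `0` near the origin.
-/

theorem deriv_mul_add_div_mul_eq {A B C : ℝ → ℝ} {B' x : ℝ} (hA : DifferentiableAt ℝ A x)
    (hB : HasDerivAt B B' x) (hAx : A x ≠ 0) :
    deriv (fun y => A y * B y) x + (-(deriv A x - C x) / A x) * (A x * B x) =
      A x * B' + C x * B x := by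
  rw [(hA.hasDerivAt.fun_mul hB).deriv]
  field_simp
  ring

theorem hasDerivAt_sub_const_mul_sq (c x : ℝ) :
    HasDerivAt (fun y : ℝ => y - c * y ^ 2) (1 - 2 * c * x) x :=
  ((hasDerivAt_id' x).fun_sub ((hasDerivAt_pow 2 x).const_mul c)).congr_deriv (by ring)

theorem exists_abs_lt_imp_ne_zero {A : ℝ → ℝ} (hA : ContinuousAt A 0) (hA0 : A 0 ≠ 0) :
    ∃ ε > (0 : ℝ), ∀ x : ℝ, |x| < ε → A x ≠ 0 := by
  obtain ⟨ε, hε, hne⟩ := Metric.eventually_nhds_iff.mp (hA.eventually_ne hA0)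
  exact ⟨ε, hε, fun x hx => hne (by rwa [Real.dist_0_eq_abs])⟩

/-- Zero-Urabe-function isochronicity identity: with `Ã`, `B̃`, `C̃` as below and the
Liénard data `f(x) = −(Ã′(x) − C̃(x))/Ã(x)`, `g(x) = Ã(x)·B̃(x)`, the identity
`g′(x) + f(x)·g(x) = 1` holds on a neighborhood of `0`. -/
theorem stmt_12 (b : ℝ) (A B C f g : ℝ → ℝ)
    (hA : ∀ x : ℝ, A x = 1 - (1/4)*b^3*x^3)
    (hB : ∀ x : ℝ, B x = x - (1/2)*b*x^2)
    (hC : ∀ x : ℝ, C x = b + (1/2)*b^2*x + (1/2)*b^3*x^2)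
    (hf : ∀ x : ℝ, f x = -(deriv A x - C x) / A x)
    (hg : ∀ x : ℝ, g x = A x * B x) :
    ∃ ε > (0 : ℝ), ∀ x : ℝ, |x| < ε → deriv g x + f x * g x = 1 := by
  obtain rfl : g = fun x => A x * B x := funext hg
  obtain rfl : A = fun x => 1 - (1/4)*b^3*x^3 := funext hA
  obtain rfl : B = fun x => x - (1/2)*b*x^2 := funext hB
  obtain ⟨ε, hε, hAne⟩ := exists_abs_lt_imp_ne_zero (A := fun x => 1 - (1/4)*b^3*x^3)
    (by fun_prop) (by norm_num)
  refine ⟨ε, hε, fun x hx => ?_⟩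
  rw [hf, deriv_mul_add_div_mul_eq (by fun_prop) (hasDerivAt_sub_const_mul_sq _ x) (hAne x hx),
    hC]
  ring
end

section
/- Let b ∈ ℝ. Set Ã(x) = 1 − (1/192)·b³·(−21 + 5·√33)·x³, B̃(x) = x − (1/2)·b·x² + (1/48)·b²·(9 − √33)·x³, C̃(x) = b + (1/16)·b²·(−1 + √33)·x + (1/64)·b³·(−21 + 5·√33)·x², and define f(x) = −(Ã′(x) − C̃(x))/Ã(x), g(x) = Ã(x)·B̃(x). Then there is a neighborhood of 0 on which g′(x) + f(x)·g(x) = 1 for all x. -/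
lemma key13 (b x s : ℝ) (hs2 : s^2 = 33) :
    (1 - (1/192)*b^3*(-21 + 5*s)*x^3) * (1 - (1/2)*b*(2*x) + (1/48)*b^2*(9 - s)*(3*x^2))
    + (b + (1/16)*b^2*(-1 + s)*x + (1/64)*b^3*(-21 + 5*s)*x^2)
      * (x - (1/2)*b*x^2 + (1/48)*b^2*(9 - s)*x^3) = 1 := by
  linear_combination (-(1/768)*b^4*x^4) * hs2

/-- Zero-Urabe-function isochronicity identity: with `Ã`, `B̃`, `C̃` as below and the
Liénard data `f(x) = −(Ã′(x) − C̃(x))/Ã(x)`, `g(x) = Ã(x)·B̃(x)`, the identity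
`g′(x) + f(x)·g(x) = 1` holds on a neighborhood of `0`. -/
theorem stmt_13 (b : ℝ) (A B C f g : ℝ → ℝ)
    (hA : ∀ x : ℝ, A x = 1 - (1/192)*b^3*(-21 + 5*Real.sqrt 33)*x^3)
    (hB : ∀ x : ℝ, B x = x - (1/2)*b*x^2 + (1/48)*b^2*(9 - Real.sqrt 33)*x^3)
    (hC : ∀ x : ℝ, C x = b + (1/16)*b^2*(-1 + Real.sqrt 33)*x + (1/64)*b^3*(-21 + 5*Real.sqrt 33)*x^2)
    (hf : ∀ x : ℝ, f x = -(deriv A x - C x) / A x)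
    (hg : ∀ x : ℝ, g x = A x * B x) :
    ∃ ε > (0 : ℝ), ∀ x : ℝ, |x| < ε → deriv g x + f x * g x = 1 := by
  have hs2 : Real.sqrt 33 ^ 2 = 33 := Real.sq_sqrt (by norm_num)
  obtain ⟨s, hsdef⟩ : ∃ s : ℝ, s = Real.sqrt 33 := ⟨_, rfl⟩
  rw [← hsdef] at hs2 hA hB hC
  obtain ⟨c, hcdef⟩ : ∃ c : ℝ, c = (1/192)*b^3*(-21 + 5*s) := ⟨_, rfl⟩
  have hAfun : A = fun y => 1 - c*y^3 := funext fun y => by rw [hA y, hcdef]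
  have hBfun : B = fun y => y - (1/2)*b*y^2 + (1/48)*b^2*(9 - s)*y^3 := funext fun y => hB y
  refine ⟨min 1 (1/(1+|c|)), by positivity, ?_⟩
  intro x hx
  have hx1 : |x| < 1 := lt_of_lt_of_le hx (min_le_left _ _)
  have hx2 : |x| < 1/(1+|c|) := lt_of_lt_of_le hx (min_le_right _ _)
  have hcx : |c*x^3| < 1 := by
    have h3 : |c*x^3| = |c| * |x| ^ 3 := by rw [abs_mul, abs_pow]
    have h5 : |c| * |x| < 1 := by
      have hpos : (0:ℝ) < 1 + |c| := by positivity
      rw [lt_div_iff₀ hpos] at hx2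
      nlinarith [abs_nonneg c, abs_nonneg x]
    calc |c*x^3| = |c| * |x| ^ 3 := h3
      _ ≤ |c| * |x| := by
          have h4 : |x| ^ 3 ≤ |x| := by nlinarith [mul_nonneg (sq_nonneg |x|) (sub_nonneg.2 hx1.le), mul_nonneg (abs_nonneg x) (sub_nonneg.2 hx1.le)]
          exact mul_le_mul_of_nonneg_left h4 (abs_nonneg c)
      _ < 1 := h5
  have hAx : A x ≠ 0 := by
    rw [hA x, ← hcdef]
    have h := abs_lt.1 hcx
    nlinarith [h.1, h.2]
  have hAder : HasDerivAt A (-(c*(3*x^2))) x := by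
    rw [hAfun]
    simpa using (((hasDerivAt_pow 3 x).const_mul c).const_sub 1)
  have hBder : HasDerivAt B (1 - (1/2)*b*(2*x) + (1/48)*b^2*(9 - s)*(3*x^2)) x := by
    rw [hBfun]
    have h1 : HasDerivAt (fun y : ℝ => y) 1 x := hasDerivAt_id x
    have h2 : HasDerivAt (fun y : ℝ => (1/2)*b*y^2) ((1/2)*b*(2*x)) x := by
      simpa using ((hasDerivAt_pow 2 x).const_mul ((1/2)*b))
    have h3 : HasDerivAt (fun y : ℝ => (1/48)*b^2*(9 - s)*y^3) ((1/48)*b^2*(9 - s)*(3*x^2)) x := by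
      simpa using ((hasDerivAt_pow 3 x).const_mul ((1/48)*b^2*(9 - s)))
    exact (h1.sub h2).add h3
  have hgfun : g = fun y => A y * B y := funext fun y => hg y
  have hgder : HasDerivAt g
      ((-(c*(3*x^2))) * B x + A x * (1 - (1/2)*b*(2*x) + (1/48)*b^2*(9 - s)*(3*x^2))) x := by
    rw [hgfun]; exact hAder.mul hBder
  have hdiv : f x * g x = (C x + c*(3*x^2)) * B x := by
    rw [hf x, hg x, hAder.deriv]
    field_simp
    ring
  rw [hgder.deriv, hdiv, hA x, hB x, hC x]
  subst hcdef
  linear_combination (-(1/768)*b^4*x^4) * hs2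
end

section
/- Define I(x,y) = x² + y²/(1 + y)² on the open set U = {(x,y) ∈ ℝ² : y ≠ −1}. Then for every (x,y) ∈ U, (−y)·∂I/∂x(x,y) + x·(1 + y)³·∂I/∂y(x,y) = 0, i.e. I is a first integral of the Abel system ẋ = −y, ẏ = x(1 + y)³. -/
/-- `I(x,y) = x² + y²/(1 + y)²` is a first integral of the Abel system
`ẋ = −y, ẏ = x(1 + y)³` on the set where `y ≠ −1`. -/
theorem stmt_17 (x y : ℝ) (hy : y ≠ -1) :
    (-y) * deriv (fun t : ℝ => t ^ 2 + y ^ 2 / (1 + y) ^ 2) x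
      + (x * (1 + y) ^ 3) * deriv (fun t : ℝ => x ^ 2 + t ^ 2 / (1 + t) ^ 2) y = 0 := by
  have h1y : (1 : ℝ) + y ≠ 0 := by intro h; apply hy; linarith
  have hd1 : HasDerivAt (fun t : ℝ => t ^ 2 + y ^ 2 / (1 + y) ^ 2)
      (2 * x ^ 1) x := by
    simpa using (hasDerivAt_pow 2 x).add_const (y ^ 2 / (1 + y) ^ 2)
  have hden : HasDerivAt (fun t : ℝ => (1 + t) ^ 2) (2 * (1 + y) ^ 1 * 1) y :=
    (((hasDerivAt_id y).const_add 1).pow 2)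
  have hnum : HasDerivAt (fun t : ℝ => t ^ 2) (2 * y ^ 1) y := hasDerivAt_pow 2 y
  have hd2 : HasDerivAt (fun t : ℝ => x ^ 2 + t ^ 2 / (1 + t) ^ 2)
      ((2 * y ^ 1 * (1 + y) ^ 2 - y ^ 2 * (2 * (1 + y) ^ 1 * 1)) / ((1 + y) ^ 2) ^ 2) y :=
    (hnum.div hden (pow_ne_zero 2 h1y)).const_add (x ^ 2)
  rw [hd1.deriv, hd2.deriv]
  field_simp
  ring
end

section
/- Define the planar polynomial vector fields X = (X₁, X₂) and Y = (Y₁, Y₂) by X₁(x,y) = −y, X₂(x,y) = x(1 + y)³, Y₁(x,y) = x + xy, Y₂(x,y) = −x²y³ + y² − 3x²y² + y − 3x²y − x². Then the Lie bracket [X, Y] vanishes identically: for all (x,y) ∈ ℝ², X₁·∂Y₁/∂x + X₂·∂Y₁/∂y − Y₁·∂X₁/∂x − Y₂·∂X₁/∂y = 0 and X₁·∂Y₂/∂x + X₂·∂Y₂/∂y − Y₁·∂X₂/∂x − Y₂·∂X₂/∂y = 0. -/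
/-- The vector fields `X = (−y, x(1+y)³)` and
`Y = (x + xy, −x²y³ + y² − 3x²y² + y − 3x²y − x²)` commute: their Lie bracket
`[X,Y]`, with components `(X·∇)Yᵢ − (Y·∇)Xᵢ`, vanishes identically. -/
theorem stmt_18 (x y : ℝ) :
    ((-y) * deriv (fun t : ℝ => t + t * y) x
      + (x * (1 + y) ^ 3) * deriv (fun t : ℝ => x + x * t) y
      - (x + x * y) * deriv (fun t : ℝ => -y) x
      - (-x ^ 2 * y ^ 3 + y ^ 2 - 3 * x ^ 2 * y ^ 2 + y - 3 * x ^ 2 * y - x ^ 2) *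
          deriv (fun t : ℝ => -t) y
      = 0)
    ∧ ((-y) * deriv (fun t : ℝ =>
          -t ^ 2 * y ^ 3 + y ^ 2 - 3 * t ^ 2 * y ^ 2 + y - 3 * t ^ 2 * y - t ^ 2) x
      + (x * (1 + y) ^ 3) * deriv (fun t : ℝ =>
          -x ^ 2 * t ^ 3 + t ^ 2 - 3 * x ^ 2 * t ^ 2 + t - 3 * x ^ 2 * t - x ^ 2) y
      - (x + x * y) * deriv (fun t : ℝ => t * (1 + y) ^ 3) x
      - (-x ^ 2 * y ^ 3 + y ^ 2 - 3 * x ^ 2 * y ^ 2 + y - 3 * x ^ 2 * y - x ^ 2) *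
          deriv (fun t : ℝ => x * (1 + t) ^ 3) y
      = 0) := by
  simp (disch := fun_prop) only [deriv_fun_add, deriv_fun_sub, deriv_fun_mul, deriv_fun_pow,
    deriv.fun_neg', deriv_id'', deriv_neg'', deriv_const', deriv_const_mul_id', deriv_const_add_id']
  constructor <;> ring
end

section
/- Define V(x,y) = −(y + 1)·(x² + 2x²y + x²y² + y²) on ℝ². Then for all (x,y) ∈ ℝ², (−y)·∂V/∂x(x,y) + x·(1 + y)³·∂V/∂y(x,y) = V(x,y)·(3x·(1 + y)²), i.e. V is an inverse integrating factor of the system ẋ = −y, ẏ = x(1 + y)³ (note that 3x(1+y)² is the divergence of this vector field). -/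
/-! In the factored form `V(x, y) = -(1 + y)(x²(1 + y)² + y²)` the partial derivatives are
`∂V/∂x = -2x(1 + y)³` and `∂V/∂y = -(3x²(1 + y)² + 3y² + 2y)`; substituting them, both sides
of the identity equal `-3x(1 + y)³(x²(1 + y)² + y²)`. -/

lemma hasDerivAt_inverseIntegratingFactor_x (x y : ℝ) :
    HasDerivAt (fun t : ℝ => -(y + 1) * (t ^ 2 + 2 * t ^ 2 * y + t ^ 2 * y ^ 2 + y ^ 2))
      (-2 * x * (1 + y) ^ 3) x := by
  have hV : (fun t : ℝ => -(y + 1) * (t ^ 2 + 2 * t ^ 2 * y + t ^ 2 * y ^ 2 + y ^ 2))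
      = fun t => -(1 + y) ^ 3 * t ^ 2 - (1 + y) * y ^ 2 := by
    funext t; ring
  rw [hV]
  exact (((hasDerivAt_pow 2 x).const_mul _).sub_const _).congr_deriv (by norm_num; ring)

lemma hasDerivAt_inverseIntegratingFactor_y (x y : ℝ) :
    HasDerivAt (fun t : ℝ => -(t + 1) * (x ^ 2 + 2 * x ^ 2 * t + x ^ 2 * t ^ 2 + t ^ 2))
      (-(3 * x ^ 2 * (1 + y) ^ 2 + 3 * y ^ 2 + 2 * y)) y := by
  have hV : (fun t : ℝ => -(t + 1) * (x ^ 2 + 2 * x ^ 2 * t + x ^ 2 * t ^ 2 + t ^ 2))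
      = fun t => -x ^ 2 * (1 + t) ^ 3 - (t ^ 3 + t ^ 2) := by
    funext t; ring
  rw [hV]
  exact (((((hasDerivAt_id' y).const_add 1).fun_pow 3).const_mul _).sub
    ((hasDerivAt_pow 3 y).add (hasDerivAt_pow 2 y))).congr_deriv (by norm_num; ring)

/-- `V(x,y) = −(y + 1)(x² + 2x²y + x²y² + y²)` is an inverse integrating factor of
the Abel system `ẋ = −y, ẏ = x(1 + y)³`:
`X₁·∂V/∂x + X₂·∂V/∂y = V · div(X)`, where `div(X) = 3x(1 + y)²`. -/
theorem stmt_19 (x y : ℝ) :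
    (-y) * deriv (fun t : ℝ =>
        -(y + 1) * (t ^ 2 + 2 * t ^ 2 * y + t ^ 2 * y ^ 2 + y ^ 2)) x
      + (x * (1 + y) ^ 3) * deriv (fun t : ℝ =>
        -(t + 1) * (x ^ 2 + 2 * x ^ 2 * t + x ^ 2 * t ^ 2 + t ^ 2)) y
      = (-(y + 1) * (x ^ 2 + 2 * x ^ 2 * y + x ^ 2 * y ^ 2 + y ^ 2)) *
          (3 * x * (1 + y) ^ 2) := by
  rw [(hasDerivAt_inverseIntegratingFactor_x x y).deriv,
    (hasDerivAt_inverseIntegratingFactor_y x y).deriv]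
  ring
end
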